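/- Fix N ≥ 1 and 0 ≤ p ≤ 1, and work with complex matrices indexed by Fin N → Fin 2 (the Hilbert space of N qubits). For s : Fin N → Fin 2, let Z_s = ⊗_{k} σ_z^{s_k} (the tensor product applying σ_z on qubit k whenever s_k = 1 and the identity otherwise), and for a matrix ρ define 𝒟(ρ) = ∑_s (1−p)^{N−|s|} p^{|s|} Z_s ρ Z_s, where |s| is the number of k with s_k = 1. Let J_x = (1/2) ∑_{k=0}^{N−1} X_k, where X_k applies σ_x on qubit k and the identity elsewhere. Then for every ρ with Tr ρ = 1: Tr(J_x 𝒟(ρ)) = (1−2p) Tr(J_x ρ), and Tr(J_x² 𝒟(ρ)) = N/4 + (1−2p)² ( Tr(J_x² ρ) − N/4 ). -/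
import Mathlib


open Matrix Finset

def pauliX : Matrix (Fin 2) (Fin 2) ℂ := !![0, 1; 1, 0]
def pauliZ : Matrix (Fin 2) (Fin 2) ℂ := !![1, 0; 0, -1]

/-- `Z_s = ⊗_k σ_z^{s_k}`: apply `σ_z` on qubit `k` whenever `s k = 1`,
the identity otherwise. -/
noncomputable def Zs {N : ℕ} (s : Fin N → Fin 2) :
    Matrix (Fin N → Fin 2) (Fin N → Fin 2) ℂ :=
  Matrix.of fun a b => ∏ k, (if s k = 1 then pauliZ else 1) (a k) (b k)

/-- `|s|`: the number of `k` with `s k = 1`. -/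
def hamWt {N : ℕ} (s : Fin N → Fin 2) : ℕ :=
  (univ.filter fun k => s k = 1).card

/-- `N` independent single-qubit dephasing channels:
`𝒟(ρ) = ∑_s (1−p)^{N−|s|} p^{|s|} Z_s ρ Z_s`. -/
noncomputable def dephN {N : ℕ} (p : ℝ)
    (ρ : Matrix (Fin N → Fin 2) (Fin N → Fin 2) ℂ) :
    Matrix (Fin N → Fin 2) (Fin N → Fin 2) ℂ :=
  ∑ s : Fin N → Fin 2,
    (((1 - p) ^ (N - hamWt s) * p ^ hamWt s : ℝ) : ℂ) • (Zs s * ρ * Zs s)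

/-- `σ_x` acting on qubit `k` and the identity elsewhere. -/
noncomputable def Xat {N : ℕ} (k : Fin N) :
    Matrix (Fin N → Fin 2) (Fin N → Fin 2) ℂ :=
  Matrix.of fun a b =>
    pauliX (a k) (b k) * ∏ j ∈ univ.filter (· ≠ k), (if a j = b j then (1 : ℂ) else 0)

/-- The collective spin operator `J_x = (1/2) ∑_k X_k`. -/
noncomputable def Jx (N : ℕ) : Matrix (Fin N → Fin 2) (Fin N → Fin 2) ℂ :=
  (1 / 2 : ℂ) • ∑ k : Fin N, Xat k

namespace DephAux

def eps (t : Fin 2) : ℂ := if t = 1 then -1 else 1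

def zf (t : Fin 2) : Matrix (Fin 2) (Fin 2) ℂ := if t = 1 then pauliZ else 1

lemma pauliX_diag (i : Fin 2) : pauliX i i = 0 := by fin_cases i <;> simp [pauliX]

lemma pauliX_off (i : Fin 2) : pauliX i (i + 1) = 1 := by fin_cases i <;> simp [pauliX]

lemma zf_off {t i j : Fin 2} (h : i ≠ j) : zf t i j = 0 := by
  fin_cases t <;> fin_cases i <;> fin_cases j <;> simp_all [zf, pauliZ, Matrix.one_apply]

lemma zf_sq (t i : Fin 2) : zf t i i * zf t i i = 1 := by
  fin_cases t <;> fin_cases i <;> norm_num [zf, pauliZ, Matrix.one_apply, Matrix.cons_val_zero, Matrix.cons_val_one, Matrix.head_cons]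

lemma zf_flip (t i : Fin 2) : zf t i i * zf t (i + 1) (i + 1) = eps t := by
  fin_cases t <;> fin_cases i <;> norm_num [show (1+1 : Fin 2) = 0 from rfl, show (0+1 : Fin 2) = 1 from rfl, zf, pauliZ, eps, Matrix.one_apply, Matrix.cons_val_zero, Matrix.cons_val_one, Matrix.head_cons]

variable {N : ℕ}

def zsign (s a : Fin N → Fin 2) : ℂ := ∏ k, zf (s k) (a k) (a k)

lemma Zs_eq (s : Fin N → Fin 2) : Zs s = Matrix.diagonal (zsign s) := by
  ext a b
  by_cases h : a = b
  · subst h; simp [Zs, zsign, Matrix.diagonal_apply_eq]; rfl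
  · obtain ⟨j, hj⟩ := Function.ne_iff.mp h
    rw [Matrix.diagonal_apply_ne _ h]
    exact Finset.prod_eq_zero (mem_univ j) (zf_off hj)

def flp (k : Fin N) (a : Fin N → Fin 2) : Fin N → Fin 2 := Function.update a k (a k + 1)

lemma fin2_aa (i : Fin 2) : i + 1 + 1 = i := by fin_cases i <;> decide

lemma fin2_ne {i j : Fin 2} (h : j ≠ i) : j = i + 1 := by
  fin_cases i <;> fin_cases j <;> simp_all

lemma flp_flp (k : Fin N) (a : Fin N → Fin 2) : flp k (flp k a) = a := by
  funext j
  by_cases h : j = k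
  · subst h; simp [flp, fin2_aa]
  · simp [flp, Function.update_of_ne h]

lemma Xat_apply (k : Fin N) (a b : Fin N → Fin 2) :
    Xat k a b = if b = flp k a then 1 else 0 := by
  rw [Xat]; simp only [Matrix.of_apply]
  by_cases h : b = flp k a
  · subst h
    rw [if_pos rfl]
    have hk : flp k a k = a k + 1 := Function.update_self _ _ _
    rw [hk, pauliX_off, one_mul]
    refine Finset.prod_eq_one fun j hj => ?_
    have h' : flp k a j = a j := Function.update_of_ne (Finset.mem_filter.mp hj).2 _ _
    rw [h', if_pos rfl]
  · rw [if_neg h]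
    by_cases hk : b k = a k
    · rw [hk, pauliX_diag, zero_mul]
    · have hbk : b k = a k + 1 := fin2_ne hk
      have : ∃ j, j ≠ k ∧ a j ≠ b j := by
        by_contra hc
        push_neg at hc
        apply h
        funext j
        by_cases hj : j = k
        · subst hj; simp [flp, hbk]
        · rw [flp, Function.update_of_ne hj]
          exact (hc j hj).symm
      obtain ⟨j, hjk, hab⟩ := this
      have hz : (∏ j ∈ univ.filter (· ≠ k), (if a j = b j then (1:ℂ) else 0)) = 0 := by
        refine Finset.prod_eq_zero (Finset.mem_filter.mpr ⟨mem_univ j, hjk⟩) ?_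
        exact if_neg hab
      rw [hz, mul_zero]

lemma Xat_mul_Xat (k : Fin N) : Xat k * Xat k = 1 := by
  ext a b
  rw [Matrix.mul_apply]
  simp only [Xat_apply, ite_mul, one_mul, zero_mul]
  rw [Finset.sum_ite_eq' univ (flp k a)]
  simp [flp_flp, Matrix.one_apply, eq_comm]



lemma zsign_sq (s a : Fin N → Fin 2) : zsign s a * zsign s a = 1 := by
  rw [zsign, ← Finset.prod_mul_distrib]
  exact Finset.prod_eq_one fun j _ => zf_sq _ _

lemma ZsZs (s : Fin N → Fin 2) : Zs s * Zs s = 1 := by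
  rw [Zs_eq, Matrix.diagonal_mul_diagonal]
  rw [show (fun i => zsign s i * zsign s i) = fun _ => (1:ℂ) from funext fun a => zsign_sq s a]
  exact Matrix.diagonal_one

lemma zsign_mul_flp (s a : Fin N → Fin 2) (k : Fin N) :
    zsign s a * zsign s (flp k a) = eps (s k) := by
  rw [zsign, zsign, ← Finset.prod_mul_distrib,
    ← Finset.mul_prod_erase univ _ (mem_univ k)]
  have h1 : ∏ j ∈ univ.erase k, zf (s j) (a j) (a j) * zf (s j) (flp k a j) (flp k a j) = 1 := by
    refine Finset.prod_eq_one fun j hj => ?_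
    have h' : flp k a j = a j := Function.update_of_ne (Finset.ne_of_mem_erase hj) _ _
    rw [h']; exact zf_sq _ _
  rw [h1, mul_one, show flp k a k = a k + 1 from Function.update_self _ _ _]
  exact zf_flip _ _

lemma ZXZ (s : Fin N → Fin 2) (k : Fin N) :
    Zs s * Xat k * Zs s = eps (s k) • Xat k := by
  rw [Zs_eq]
  ext a b
  simp only [Matrix.mul_diagonal, Matrix.diagonal_mul, Matrix.smul_apply, smul_eq_mul,
    Xat_apply]
  by_cases h : b = flp k a
  · subst h
    rw [if_pos rfl, mul_one, mul_one]
    exact zsign_mul_flp s a k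
  · rw [if_neg h]; ring

lemma mul_ZsZs (s : Fin N → Fin 2) (M : Matrix (Fin N → Fin 2) (Fin N → Fin 2) ℂ) :
    M * Zs s * Zs s = M := by rw [mul_assoc, ZsZs, mul_one]

lemma ZXXZ (s : Fin N → Fin 2) (k l : Fin N) :
    Zs s * (Xat k * Xat l) * Zs s = (eps (s k) * eps (s l)) • (Xat k * Xat l) := by
  have key : Zs s * (Xat k * Xat l) * Zs s
      = (Zs s * Xat k * Zs s) * (Zs s * Xat l * Zs s) := by
    simp only [← mul_assoc]
    rw [mul_assoc (Zs s * Xat k) (Zs s) (Zs s), ZsZs, mul_one]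
  rw [key, ZXZ, ZXZ, smul_mul_assoc, mul_smul_comm, smul_smul]

lemma traceD (p : ℝ) (ρ A : Matrix (Fin N → Fin 2) (Fin N → Fin 2) ℂ) :
    (A * dephN p ρ).trace
      = ∑ s : Fin N → Fin 2,
          (((1 - p) ^ (N - hamWt s) * p ^ hamWt s : ℝ) : ℂ) * ((Zs s * A * Zs s) * ρ).trace := by
  rw [dephN, Matrix.mul_sum, Matrix.trace_sum]
  refine Finset.sum_congr rfl fun s _ => ?_
  rw [Matrix.mul_smul, Matrix.trace_smul, smul_eq_mul]
  congr 1
  rw [show A * (Zs s * ρ * Zs s) = (A * (Zs s * ρ)) * Zs s by simp [mul_assoc],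
    Matrix.trace_mul_comm]
  congr 1
  simp [mul_assoc]

lemma master (p : ℝ) (φ : Fin N → Fin 2 → ℂ) :
    ∑ s : Fin N → Fin 2,
        (((1 - p) ^ (N - hamWt s) * p ^ hamWt s : ℝ) : ℂ) * ∏ j, φ j (s j)
      = ∏ j, ((1 - (p : ℂ)) * φ j 0 + (p : ℂ) * φ j 1) := by
  have hw : ∀ s : Fin N → Fin 2,
      (((1 - p) ^ (N - hamWt s) * p ^ hamWt s : ℝ) : ℂ)
        = ∏ j, (if s j = 1 then (p : ℂ) else 1 - p) := by
    intro s
    rw [Finset.prod_ite, Finset.prod_const, Finset.prod_const]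
    have h1 : (univ.filter fun j => s j = 1).card = hamWt s := rfl
    have h2 : (univ.filter fun j => ¬ s j = 1).card = N - hamWt s := by
      have h3 := Finset.card_filter_add_card_filter_not
        (s := (univ : Finset (Fin N))) (p := fun j => s j = 1)
      have h4 : (univ : Finset (Fin N)).card = N := by simp
      rw [hamWt]; omega
    rw [h1, h2]
    push_cast
    ring
  calc ∑ s : Fin N → Fin 2,
        (((1 - p) ^ (N - hamWt s) * p ^ hamWt s : ℝ) : ℂ) * ∏ j, φ j (s j)
      = ∑ s : Fin N → Fin 2, ∏ j, ((if s j = 1 then (p : ℂ) else 1 - p) * φ j (s j)) := by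
        refine Finset.sum_congr rfl fun s _ => ?_
        rw [hw, ← Finset.prod_mul_distrib]
    _ = ∏ j, ∑ x : Fin 2, ((if x = 1 then (p : ℂ) else 1 - p) * φ j x) := by
        have key : ∀ g : Fin N → Fin 2 → ℂ,
            ∑ s : Fin N → Fin 2, ∏ j, g j (s j) = ∏ j, ∑ x : Fin 2, g j x := by
          intro g
          rw [← Fintype.piFinset_univ, ← Finset.prod_univ_sum]
        exact key fun j x => (if x = 1 then (p : ℂ) else 1 - p) * φ j x
    _ = _ := by
        refine Finset.prod_congr rfl fun j _ => ?_
        rw [Fin.sum_univ_two]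
        norm_num [show (0 : Fin 2) ≠ 1 by decide]

lemma sum_w (p : ℝ) :
    ∑ s : Fin N → Fin 2,
        (((1 - p) ^ (N - hamWt s) * p ^ hamWt s : ℝ) : ℂ) = 1 := by
  have := master (N := N) p (fun _ _ => 1)
  simpa using this

lemma sum_w_eps (p : ℝ) (k : Fin N) :
    ∑ s : Fin N → Fin 2,
        (((1 - p) ^ (N - hamWt s) * p ^ hamWt s : ℝ) : ℂ) * eps (s k)
      = 1 - 2 * (p : ℂ) := by
  have hm := master (N := N) p (fun j x => if j = k then eps x else 1)
  have h1 : ∀ s : Fin N → Fin 2,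
      (∏ j, (if j = k then eps (s j) else 1)) = eps (s k) := by
    intro s
    simp [Finset.prod_ite_eq]
  have h2 : ∀ j : Fin N,
      (1 - (p : ℂ)) * (if j = k then eps 0 else 1) + (p : ℂ) * (if j = k then eps 1 else 1)
        = if j = k then 1 - 2 * (p : ℂ) else 1 := by
    intro j
    by_cases h : j = k <;> simp [h, eps] <;> ring
  rw [Finset.sum_congr rfl fun s _ => by rw [h1 s]] at hm
  rw [Finset.prod_congr rfl fun j _ => h2 j] at hm
  simpa [Finset.prod_ite_eq] using hm

lemma eps_sq (x : Fin 2) : eps x * eps x = 1 := by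
  fin_cases x <;> norm_num [eps]

lemma sum_w_eps2 (p : ℝ) {k l : Fin N} (hkl : k ≠ l) :
    ∑ s : Fin N → Fin 2,
        (((1 - p) ^ (N - hamWt s) * p ^ hamWt s : ℝ) : ℂ) * (eps (s k) * eps (s l))
      = (1 - 2 * (p : ℂ)) ^ 2 := by
  have hm := master (N := N) p
    (fun j x => (if j = k then eps x else 1) * (if j = l then eps x else 1))
  have h1 : ∀ s : Fin N → Fin 2,
      (∏ j, ((if j = k then eps (s j) else 1) * (if j = l then eps (s j) else 1)))
        = eps (s k) * eps (s l) := by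
    intro s
    rw [Finset.prod_mul_distrib]
    simp [Finset.prod_ite_eq]
  have h2 : ∀ j : Fin N,
      (1 - (p : ℂ)) * ((if j = k then eps 0 else 1) * (if j = l then eps 0 else 1))
        + (p : ℂ) * ((if j = k then eps 1 else 1) * (if j = l then eps 1 else 1))
        = (if j = k then 1 - 2 * (p : ℂ) else 1) * (if j = l then 1 - 2 * (p : ℂ) else 1) := by
    intro j
    rcases eq_or_ne j k with h | h <;> rcases eq_or_ne j l with h' | h'
    · exact absurd (h.symm.trans h') hkl
    · subst h
      simp [eps, hkl]
      try ring
    · subst h'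
      simp [eps, h]
      try ring
    · simp only [if_neg h, if_neg h']
      ring
  rw [Finset.sum_congr rfl fun s _ => by rw [h1 s]] at hm
  rw [Finset.prod_congr rfl fun j _ => h2 j] at hm
  rw [Finset.prod_mul_distrib] at hm
  simp only [Finset.prod_ite_eq', mem_univ, if_true] at hm
  rw [hm]
  ring

lemma ZJZ (s : Fin N → Fin 2) :
    Zs s * Jx N * Zs s = (1/2 : ℂ) • ∑ k, eps (s k) • Xat k := by
  rw [Jx, Matrix.mul_smul, Matrix.smul_mul, Matrix.mul_sum, Matrix.sum_mul]
  congr 1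
  exact Finset.sum_congr rfl fun k _ => ZXZ s k

lemma hJJ : Jx N * Jx N = (1/4 : ℂ) • ∑ k, ∑ l, Xat k * Xat l := by
  rw [Jx, Matrix.smul_mul, Matrix.mul_smul, smul_smul, Finset.sum_mul_sum]
  norm_num

lemma ZJJZ (s : Fin N → Fin 2) :
    Zs s * (Jx N * Jx N) * Zs s
      = (1/4 : ℂ) • ∑ k, ∑ l, (eps (s k) * eps (s l)) • (Xat k * Xat l) := by
  rw [hJJ, Matrix.mul_smul, Matrix.smul_mul, Matrix.mul_sum, Matrix.sum_mul]
  congr 1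
  refine Finset.sum_congr rfl fun k _ => ?_
  rw [Matrix.mul_sum, Matrix.sum_mul]
  exact Finset.sum_congr rfl fun l _ => ZXXZ s k l

end DephAux

open DephAux

/-- Moments of `J_x` under `N`-fold dephasing: for any `ρ` with `Tr ρ = 1`,
`Tr(J_x 𝒟(ρ)) = (1−2p) Tr(J_x ρ)` and
`Tr(J_x² 𝒟(ρ)) = N/4 + (1−2p)² (Tr(J_x² ρ) − N/4)`. -/
theorem dephasing_Jx_moments {N : ℕ} (hN : 1 ≤ N) (p : ℝ)
    (hp0 : 0 ≤ p) (hp1 : p ≤ 1)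
    (ρ : Matrix (Fin N → Fin 2) (Fin N → Fin 2) ℂ) (hρtr : ρ.trace = 1) :
    (Jx N * dephN p ρ).trace = ((1 - 2 * p : ℝ) : ℂ) * (Jx N * ρ).trace ∧
    (Jx N * Jx N * dephN p ρ).trace
      = (N : ℂ) / 4 + (((1 - 2 * p) ^ 2 : ℝ) : ℂ) *
          ((Jx N * Jx N * ρ).trace - (N : ℂ) / 4) := by
  set w : (Fin N → Fin 2) → ℂ :=
    fun s => (((1 - p) ^ (N - hamWt s) * p ^ hamWt s : ℝ) : ℂ) with hwdef
  set t : Fin N → ℂ := fun k => (Xat k * ρ).trace with htdef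
  set t2 : Fin N → Fin N → ℂ := fun k l => ((Xat k * Xat l) * ρ).trace with ht2def
  set q : ℂ := 1 - 2 * (p : ℂ) with hqdef
  have ht2diag : ∀ k, t2 k k = 1 := by
    intro k
    rw [ht2def]
    simp only
    rw [Xat_mul_Xat, one_mul, hρtr]
  constructor
  · -- first moment
    rw [traceD p ρ (Jx N)]
    have h1 : ∀ s : Fin N → Fin 2,
        ((Zs s * Jx N * Zs s) * ρ).trace = ∑ k, (1/2 : ℂ) * (eps (s k) * t k) := by
      intro s
      rw [ZJZ, Matrix.smul_mul, Matrix.trace_smul, Matrix.sum_mul, Matrix.trace_sum,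
        smul_eq_mul, Finset.mul_sum]
      refine Finset.sum_congr rfl fun k _ => ?_
      rw [Matrix.smul_mul, Matrix.trace_smul, smul_eq_mul]
    calc ∑ s : Fin N → Fin 2, w s * ((Zs s * Jx N * Zs s) * ρ).trace
        = ∑ s : Fin N → Fin 2, ∑ k, w s * eps (s k) * ((1/2 : ℂ) * t k) := by
          refine Finset.sum_congr rfl fun s _ => ?_
          rw [h1, Finset.mul_sum]
          exact Finset.sum_congr rfl fun k _ => by ring
      _ = ∑ k, (∑ s : Fin N → Fin 2, w s * eps (s k)) * ((1/2 : ℂ) * t k) := by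
          rw [Finset.sum_comm]
          exact Finset.sum_congr rfl fun k _ => (Finset.sum_mul _ _ _).symm
      _ = ∑ k, q * ((1/2 : ℂ) * t k) := by
          refine Finset.sum_congr rfl fun k _ => ?_
          rw [sum_w_eps p k]
      _ = ((1 - 2 * p : ℝ) : ℂ) * (Jx N * ρ).trace := by
          have hJtr : (Jx N * ρ).trace = (1/2 : ℂ) * ∑ k, t k := by
            rw [Jx, Matrix.smul_mul, Matrix.trace_smul, Matrix.sum_mul, Matrix.trace_sum,
              smul_eq_mul]
          have hq' : ((1 - 2 * p : ℝ) : ℂ) = q := by rw [hqdef]; push_cast; ring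
          rw [hJtr, hq']
          simp only [Finset.mul_sum]
  · -- second moment
    rw [traceD p ρ (Jx N * Jx N)]
    have h2 : ∀ s : Fin N → Fin 2,
        ((Zs s * (Jx N * Jx N) * Zs s) * ρ).trace
          = ∑ k, ∑ l, (1/4 : ℂ) * ((eps (s k) * eps (s l)) * t2 k l) := by
      intro s
      rw [ZJJZ, Matrix.smul_mul, Matrix.trace_smul, Matrix.sum_mul, Matrix.trace_sum,
        smul_eq_mul, Finset.mul_sum]
      refine Finset.sum_congr rfl fun k _ => ?_
      rw [Matrix.sum_mul, Matrix.trace_sum, Finset.mul_sum]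
      refine Finset.sum_congr rfl fun l _ => ?_
      rw [Matrix.smul_mul, Matrix.trace_smul, smul_eq_mul]
    have hc : ∀ k l : Fin N,
        ∑ s : Fin N → Fin 2, w s * (eps (s k) * eps (s l))
          = if k = l then 1 else q ^ 2 := by
      intro k l
      by_cases h : k = l
      · subst h
        rw [if_pos rfl]
        calc ∑ s : Fin N → Fin 2, w s * (eps (s k) * eps (s k))
            = ∑ s : Fin N → Fin 2, w s := by
              refine Finset.sum_congr rfl fun s _ => ?_
              rw [eps_sq, mul_one]
          _ = 1 := sum_w p
      · rw [if_neg h]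
        exact sum_w_eps2 p h
    have hJJtr : (Jx N * Jx N * ρ).trace = (1/4 : ℂ) * ∑ k, ∑ l, t2 k l := by
      rw [hJJ, Matrix.smul_mul, Matrix.trace_smul, Matrix.sum_mul, Matrix.trace_sum,
        smul_eq_mul]
      congr 1
      refine Finset.sum_congr rfl fun k _ => ?_
      rw [Matrix.sum_mul, Matrix.trace_sum]
    calc ∑ s : Fin N → Fin 2, w s * ((Zs s * (Jx N * Jx N) * Zs s) * ρ).trace
        = ∑ s : Fin N → Fin 2, ∑ k, ∑ l,
            w s * (eps (s k) * eps (s l)) * ((1/4 : ℂ) * t2 k l) := by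
          refine Finset.sum_congr rfl fun s _ => ?_
          rw [h2, Finset.mul_sum]
          refine Finset.sum_congr rfl fun k _ => ?_
          rw [Finset.mul_sum]
          exact Finset.sum_congr rfl fun l _ => by ring
      _ = ∑ k, ∑ l, (∑ s : Fin N → Fin 2, w s * (eps (s k) * eps (s l)))
            * ((1/4 : ℂ) * t2 k l) := by
          rw [Finset.sum_comm]
          refine Finset.sum_congr rfl fun k _ => ?_
          rw [Finset.sum_comm]
          exact Finset.sum_congr rfl fun l _ => (Finset.sum_mul _ _ _).symm
      _ = ∑ k, ∑ l, ((if k = l then 1 else q ^ 2) * ((1/4 : ℂ) * t2 k l)) := by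
          exact Finset.sum_congr rfl fun k _ => Finset.sum_congr rfl fun l _ => by rw [hc]
      _ = ∑ k, ∑ l, (q ^ 2 * ((1/4 : ℂ) * t2 k l)
            + if k = l then (1 - q ^ 2) * ((1/4 : ℂ) * t2 k l) else 0) := by
          refine Finset.sum_congr rfl fun k _ => Finset.sum_congr rfl fun l _ => ?_
          by_cases h : k = l
          · rw [if_pos h, if_pos h]; ring
          · rw [if_neg h, if_neg h]; ring
      _ = q ^ 2 * ((1/4 : ℂ) * ∑ k, ∑ l, t2 k l) + (N : ℂ) * ((1 - q ^ 2) * (1/4 : ℂ)) := by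
          rw [Finset.sum_congr rfl fun k (_ : k ∈ univ) => Finset.sum_add_distrib]
          rw [Finset.sum_add_distrib]
          congr 1
          · simp only [Finset.mul_sum]
          · rw [Finset.sum_congr rfl fun k (_ : k ∈ univ) => Finset.sum_ite_eq univ k _]
            simp [ht2diag]
            try ring
      _ = (N : ℂ) / 4 + (((1 - 2 * p) ^ 2 : ℝ) : ℂ) *
            ((Jx N * Jx N * ρ).trace - (N : ℂ) / 4) := by
          rw [hJJtr]
          have hq : (((1 - 2 * p) ^ 2 : ℝ) : ℂ) = q ^ 2 := by
            rw [hqdef]; push_cast; ring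
          rw [hq]
          ring
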